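/- Let θ ∈ ℝ and let f : (0,∞) → ℂ be continuous with ∫₀^∞ |f(t)| dt/t < ∞, and Lipschitz continuous in a neighborhood of some t₀ > 0. For z ∈ ℂ not on the ray {te^{iθ} : t > 0}, define F(z) = (1/(4πi)) ∫₀^∞ (dt/t) · ((te^{iθ} + z)/(te^{iθ} − z)) · f(t). Then, with z₀ = t₀e^{iθ}, both one-sided limits lim_{δ→0⁺} F(z₀e^{iδ}) and lim_{δ→0⁺} F(z₀e^{−iδ}) exist, and lim_{δ→0⁺} ( F(z₀e^{iδ}) − F(z₀e^{−iδ}) ) = f(t₀). -/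

import Mathlib

/-!
STATEMENT 15 (Plemelj jump formula): let `f : (0,∞) → ℂ` be continuous with
`∫₀^∞ |f(t)| dt/t < ∞` and Lipschitz near `t₀ > 0`. For `z` off the ray
`{te^{iθ}}` set `F(z) = (1/(4πi)) ∫₀^∞ (dt/t)·((te^{iθ} + z)/(te^{iθ} − z))·f(t)`.
Then with `z₀ = t₀e^{iθ}` both one-sided limits `lim_{δ→0⁺} F(z₀e^{±iδ})` exist
and their difference (counterclockwise minus clockwise) equals `f(t₀)`.
-/

open MeasureTheory Filter Complex

/-- The Cauchy-type transform with kernel `ρ(z,z') = (1/(4πi))·(z'+z)/(z'−z)`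
and measure `dz'/z'` along the ray of angle `θ`. -/
noncomputable def cauchyTransform (θ : ℝ) (f : ℝ → ℂ) (z : ℂ) : ℂ :=
  (1 / (4 * Real.pi * Complex.I)) *
    ∫ t in Set.Ioi (0 : ℝ),
      (t : ℂ)⁻¹ *
        (((t : ℂ) * Complex.exp (Complex.I * θ) + z) /
          ((t : ℂ) * Complex.exp (Complex.I * θ) - z)) * f t

namespace PlemeljAux


/-- full kernel -/
noncomputable def kerF (f : ℝ → ℂ) (z : ℂ) (t : ℝ) : ℂ :=
  (t : ℂ)⁻¹ * (((t:ℂ) + z) / ((t:ℂ) - z)) * f t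

/-- regularized kernel -/
noncomputable def kerA (f : ℝ → ℂ) (t₀ a b : ℝ) (z : ℂ) (t : ℝ) : ℂ :=
  (t : ℂ)⁻¹ * (((t:ℂ) + z) / ((t:ℂ) - z)) *
    (f t - Set.indicator (Set.Ioo a b) (fun _ => f t₀) t)

/-- singular local part -/
noncomputable def kerB (f : ℝ → ℂ) (t₀ a b : ℝ) (z : ℂ) (t : ℝ) : ℂ :=
  Set.indicator (Set.Ioo a b) (fun s => (s : ℂ)⁻¹ * (((s:ℂ) + z) / ((s:ℂ) - z)) * f t₀) t

noncomputable def plemeljLimit (f : ℝ → ℂ) (t₀ a b σ : ℝ) : ℂ :=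
  (1 / (4 * Real.pi * Complex.I)) *
    ((∫ t in Set.Ioi (0:ℝ), kerA f t₀ a b (t₀:ℂ) t) +
      ((-Complex.log b + 2 * Complex.log ((b:ℂ) - (t₀:ℂ))) -
        (-Complex.log a + 2 * ((Real.log (t₀ - a) : ℂ) - (σ:ℂ) * Real.pi * Complex.I))) * f t₀)

lemma sub_ne (z : ℂ) (hz : z.im ≠ 0) (t : ℝ) : (t:ℂ) - z ≠ 0 := by
  intro h
  have := congrArg Complex.im h
  simp at this
  exact hz this

lemma split (f : ℝ → ℂ) (t₀ a b : ℝ) (z : ℂ) (t : ℝ) :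
    kerF f z t = kerA f t₀ a b z t + kerB f t₀ a b z t := by
  unfold kerF kerA kerB
  by_cases h : t ∈ Set.Ioo a b <;> simp [h] <;> ring

lemma norm_ratio_le (z : ℂ) (t c : ℝ) (ht : 0 ≤ t)
    (hc : c ≤ ‖(t:ℂ) - z‖) (hcpos : 0 < c) :
    ‖((t:ℂ) + z) / ((t:ℂ) - z)‖ ≤ (t + ‖z‖) / c := by
  rw [norm_div]
  apply div_le_div₀ (by positivity) ?_ hcpos (by exact hc)
  calc ‖(t:ℂ) + z‖ ≤ ‖(t:ℂ)‖ + ‖z‖ := norm_add_le _ _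
    _ = t + ‖z‖ := by
        rw [Complex.norm_real, Real.norm_eq_abs, _root_.abs_of_nonneg ht]

lemma abs_sub_lower1 (z : ℂ) (t : ℝ) (ht : 0 ≤ t) :
    |t - ‖z‖| ≤ ‖(t:ℂ) - z‖ := by
  have h := abs_norm_sub_norm_le ((t:ℂ)) z
  simpa [Complex.norm_real, _root_.abs_of_nonneg ht] using h

lemma abs_sub_lower2 (z : ℂ) (t : ℝ) : |z.im| ≤ ‖(t:ℂ) - z‖ := by
  have h := Complex.abs_im_le_norm ((t:ℂ) - z)
  simpa using h


lemma kerF_contOn (f : ℝ → ℂ) (hcont : ContinuousOn f (Set.Ioi 0)) (z : ℂ) (hz : z.im ≠ 0) :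
    ContinuousOn (kerF f z) (Set.Ioi 0) := by
  unfold kerF
  apply ContinuousOn.mul (ContinuousOn.mul ?_ ?_) hcont
  · exact (Complex.continuous_ofReal.continuousOn).inv₀ fun t ht =>
      Complex.ofReal_ne_zero.2 (ne_of_gt ht)
  · exact Continuous.continuousOn <| (Complex.continuous_ofReal.add continuous_const).div
      (Complex.continuous_ofReal.sub continuous_const) (fun t => sub_ne z hz t)

lemma kerF_integrable (f : ℝ → ℂ) (hcont : ContinuousOn f (Set.Ioi 0))
    (hint : IntegrableOn (fun t : ℝ => (t : ℂ)⁻¹ * f t) (Set.Ioi 0))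
    (t₀ : ℝ) (ht₀ : 0 < t₀) (z : ℂ) (habs : ‖z‖ = t₀) (hz : z.im ≠ 0) :
    IntegrableOn (kerF f z) (Set.Ioi 0) := by
  have hzim : 0 < |z.im| := abs_pos.2 hz
  set C : ℝ := 3 * t₀ / |z.im| + 3 with hC
  apply Integrable.mono' (hint.norm.const_mul C)
    ((kerF_contOn f hcont z hz).aestronglyMeasurable measurableSet_Ioi)
  rw [MeasureTheory.ae_restrict_iff' measurableSet_Ioi]
  refine Filter.Eventually.of_forall fun t ht => ?_
  have ht' : (0:ℝ) < t := ht
  have hnorm : ‖kerF f z t‖ = ‖((t:ℂ)+z)/((t:ℂ)-z)‖ * ‖(t:ℂ)⁻¹ * f t‖ := by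
    unfold kerF
    rw [show (t:ℂ)⁻¹ * (((t:ℂ)+z)/((t:ℂ)-z)) * f t
        = (((t:ℂ)+z)/((t:ℂ)-z)) * ((t:ℂ)⁻¹ * f t) by ring, norm_mul]
  rw [hnorm]
  apply mul_le_mul_of_nonneg_right ?_ (norm_nonneg _)
  rcases le_or_gt t (2*t₀) with hcase | hcase
  · calc ‖((t:ℂ)+z)/((t:ℂ)-z)‖ ≤ (t + ‖z‖) / |z.im| :=
          norm_ratio_le z t _ ht'.le (abs_sub_lower2 z t) hzim
      _ ≤ 3 * t₀ / |z.im| := by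
          rw [habs]
          gcongr
          linarith
      _ ≤ C := le_add_of_nonneg_right (by norm_num)
  · have hd : (0:ℝ) < t - t₀ := by linarith
    calc ‖((t:ℂ)+z)/((t:ℂ)-z)‖ ≤ (t + ‖z‖) / (t - t₀) := by
          apply norm_ratio_le z t _ ht'.le ?_ hd
          have := abs_sub_lower1 z t ht'.le
          rw [habs] at this
          calc t - t₀ ≤ |t - t₀| := le_abs_self _
            _ ≤ _ := this
      _ ≤ 3 := by
          rw [habs, div_le_iff₀ hd]
          linarith
      _ ≤ C := le_add_of_nonneg_left (by positivity)


lemma kerB_integrable (f : ℝ → ℂ) (t₀ a b : ℝ) (ha : 0 < a) (z : ℂ) (hz : z.im ≠ 0) :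
    Integrable (kerB f t₀ a b z) (volume.restrict (Set.Ioi 0)) := by
  have hIcc : IntegrableOn (fun s : ℝ => (s:ℂ)⁻¹ * (((s:ℂ)+z)/((s:ℂ)-z)) * f t₀)
      (Set.Icc a b) := by
    apply ContinuousOn.integrableOn_Icc
    apply ContinuousOn.mul (ContinuousOn.mul ?_ ?_) continuousOn_const
    · exact (Complex.continuous_ofReal.continuousOn).inv₀ fun t ht =>
        Complex.ofReal_ne_zero.2 (ne_of_gt (lt_of_lt_of_le ha ht.1))
    · exact Continuous.continuousOn <| (Complex.continuous_ofReal.add continuous_const).div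
        (Complex.continuous_ofReal.sub continuous_const) (fun t => sub_ne z hz t)
  exact ((hIcc.mono_set Set.Ioo_subset_Icc_self).integrable_indicator
    measurableSet_Ioo).integrableOn

lemma kerA_eq (f : ℝ → ℂ) (t₀ a b : ℝ) (z : ℂ) :
    kerA f t₀ a b z = fun t => kerF f z t - kerB f t₀ a b z t :=
  funext fun t => by rw [split f t₀ a b z t]; ring

lemma kerA_integrable (f : ℝ → ℂ) (hcont : ContinuousOn f (Set.Ioi 0))
    (hint : IntegrableOn (fun t : ℝ => (t : ℂ)⁻¹ * f t) (Set.Ioi 0))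
    (t₀ a b : ℝ) (ha : 0 < a) (ht₀ : 0 < t₀) (z : ℂ)
    (habs : ‖z‖ = t₀) (hz : z.im ≠ 0) :
    IntegrableOn (kerA f t₀ a b z) (Set.Ioi 0) := by
  rw [kerA_eq]
  exact (kerF_integrable f hcont hint t₀ ht₀ z habs hz).sub
    (kerB_integrable f t₀ a b ha z hz)

lemma kerB_integral (f : ℝ → ℂ) (t₀ a b : ℝ) (ha : 0 < a) (hab : a < b)
    (z : ℂ) (hz : z.im ≠ 0) :
    ∫ t in Set.Ioi (0:ℝ), kerB f t₀ a b z t =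
      ((-Complex.log b + 2 * Complex.log ((b:ℂ) - z)) -
        (-Complex.log a + 2 * Complex.log ((a:ℂ) - z))) * f t₀ := by
  unfold kerB
  have hsub : Set.Ioo a b ⊆ Set.Ioi 0 :=
    Set.Ioo_subset_Ioi_self.trans (Set.Ioi_subset_Ioi ha.le)
  rw [MeasureTheory.integral_indicator measurableSet_Ioo,
    Measure.restrict_restrict measurableSet_Ioo,
    Set.inter_eq_self_of_subset_left hsub,
    ← MeasureTheory.integral_Ioc_eq_integral_Ioo,
    ← intervalIntegral.integral_of_le hab.le, intervalIntegral.integral_mul_const]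
  congr 1
  have key : ∫ t in a..b, (t:ℂ)⁻¹ * (((t:ℂ)+z)/((t:ℂ)-z)) =
      (-Complex.log b + 2 * Complex.log ((b:ℂ) - z)) -
        (-Complex.log a + 2 * Complex.log ((a:ℂ) - z)) := by
    rw [intervalIntegral.integral_congr
      (g := fun t : ℝ => -(t:ℂ)⁻¹ + 2 * ((t:ℂ) - z)⁻¹) ?_]
    · have := intervalIntegral.integral_eq_sub_of_hasDerivAt
        (f := fun t : ℝ => -Complex.log t + 2 * Complex.log ((t:ℂ) - z))
        (f' := fun t : ℝ => -(t:ℂ)⁻¹ + 2 * ((t:ℂ) - z)⁻¹) (a := a) (b := b) ?_ ?_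
      · rw [this]
      · intro x hx
        rw [Set.uIcc_of_le hab.le] at hx
        have hx0 : 0 < x := lt_of_lt_of_le ha hx.1
        have h1 : HasDerivAt (fun t : ℝ => Complex.log t) (x:ℂ)⁻¹ x := by
          apply HasDerivAt.comp_ofReal
          exact Complex.hasDerivAt_log (Complex.mem_slitPlane_iff.2 (Or.inl (by simpa)))
        have h2 : HasDerivAt (fun t : ℝ => Complex.log ((t:ℂ) - z)) ((x:ℂ) - z)⁻¹ x := by
          apply HasDerivAt.comp_ofReal (e := fun w : ℂ => Complex.log (w - z))
          have hd := (Complex.hasDerivAt_log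
            (z := (x:ℂ) - z) (Complex.mem_slitPlane_iff.2 (Or.inr (by simpa using hz)))).comp
            ((x:ℂ)) (((hasDerivAt_id ((x:ℂ))).sub_const z))
          simpa [Function.comp_def] using hd
        exact h1.neg.add (h2.const_mul (2:ℂ))
      · apply ContinuousOn.intervalIntegrable
        rw [Set.uIcc_of_le hab.le]
        apply ContinuousOn.add
        · exact ((Complex.continuous_ofReal.continuousOn).inv₀ fun t ht =>
            Complex.ofReal_ne_zero.2 (ne_of_gt (lt_of_lt_of_le ha ht.1))).neg
        · exact (Continuous.continuousOn <| (Complex.continuous_ofReal.sub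
            continuous_const).inv₀ (fun t => sub_ne z hz t)).const_smul (2:ℂ)
    · intro t ht
      rw [Set.uIcc_of_le hab.le] at ht
      have ht0 : (t:ℂ) ≠ 0 := Complex.ofReal_ne_zero.2 (ne_of_gt (lt_of_lt_of_le ha ht.1))
      have htz : (t:ℂ) - z ≠ 0 := sub_ne z hz t
      field_simp
      ring
  exact key


lemma kerF_integral_split (f : ℝ → ℂ) (hcont : ContinuousOn f (Set.Ioi 0))
    (hint : IntegrableOn (fun t : ℝ => (t : ℂ)⁻¹ * f t) (Set.Ioi 0))
    (t₀ a b : ℝ) (ha : 0 < a) (hab : a < b) (ht₀ : 0 < t₀) (z : ℂ)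
    (habs : ‖z‖ = t₀) (hz : z.im ≠ 0) :
    ∫ t in Set.Ioi (0:ℝ), kerF f z t =
      (∫ t in Set.Ioi (0:ℝ), kerA f t₀ a b z t) +
        ((-Complex.log b + 2 * Complex.log ((b:ℂ) - z)) -
          (-Complex.log a + 2 * Complex.log ((a:ℂ) - z))) * f t₀ := by
  have h1 : ∫ t in Set.Ioi (0:ℝ), kerF f z t
      = ∫ t in Set.Ioi (0:ℝ), (kerA f t₀ a b z t + kerB f t₀ a b z t) :=
    MeasureTheory.setIntegral_congr_fun measurableSet_Ioi fun t _ => split f t₀ a b z t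
  rw [h1, MeasureTheory.integral_add
    (kerA_integrable f hcont hint t₀ a b ha ht₀ z habs hz)
    (kerB_integrable f t₀ a b ha z hz), kerB_integral f t₀ a b ha hab z hz]



lemma onesided (θ : ℝ) (f : ℝ → ℂ)
    (hcont : ContinuousOn f (Set.Ioi 0))
    (hint : IntegrableOn (fun t : ℝ => (t : ℂ)⁻¹ * f t) (Set.Ioi 0))
    (t₀ a b : ℝ) (ha : 0 < a) (hat : a < t₀) (htb : t₀ < b)
    (K : NNReal) (hK : LipschitzOnWith K f (Set.Ioo a b))
    (σ : ℝ) (hσ : σ = 1 ∨ σ = -1) :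
    Filter.Tendsto (fun δ : ℝ => cauchyTransform θ f ((t₀:ℂ) * Complex.exp (Complex.I * θ) *
        Complex.exp ((σ:ℂ) * (Complex.I * δ))))
      (nhdsWithin 0 (Set.Ioi 0)) (nhds (plemeljLimit f t₀ a b σ)) := by
  have ht₀ : 0 < t₀ := ha.trans hat
  set z : ℝ → ℂ := fun δ => (t₀:ℂ) * Complex.exp ((σ:ℂ) * (Complex.I * δ)) with hzdef
  have habs : ∀ δ : ℝ, ‖z δ‖ = t₀ := by
    intro δ
    rw [hzdef]
    simp only [norm_mul, Complex.norm_exp, Complex.norm_real, Real.norm_eq_abs]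
    rw [show ((σ:ℂ) * (Complex.I * δ)).re = 0 by simp, Real.exp_zero,
      _root_.abs_of_pos ht₀, mul_one]
  have him : ∀ δ : ℝ, (z δ).im = t₀ * Real.sin (σ * δ) := by
    intro δ
    rw [hzdef]
    simp only
    rw [show (σ:ℂ) * (Complex.I * δ) = ((σ*δ:ℝ):ℂ) * Complex.I by push_cast; ring,
      Complex.mul_im, Complex.exp_ofReal_mul_I_im]
    simp
  have himpos : ∀ δ ∈ Set.Ioo (0:ℝ) Real.pi, 0 < σ * (z δ).im := by
    intro δ hδ
    rw [him δ]
    have hs : 0 < Real.sin δ := Real.sin_pos_of_pos_of_lt_pi hδ.1 hδ.2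
    rcases hσ with h | h <;> subst h
    · simpa using mul_pos ht₀ hs
    · rw [show (-1:ℝ) * δ = -δ by ring, Real.sin_neg]
      nlinarith
  have himne : ∀ δ ∈ Set.Ioo (0:ℝ) Real.pi, (z δ).im ≠ 0 := by
    intro δ hδ h
    have := himpos δ hδ
    rw [h, mul_zero] at this
    exact lt_irrefl _ this
  have hzlim : Filter.Tendsto z (nhdsWithin 0 (Set.Ioi 0)) (nhds (t₀:ℂ)) := by
    have hc : Continuous z := by
      apply continuous_const.mul
      exact Complex.continuous_exp.comp (by continuity)
    have h0 : z 0 = (t₀:ℂ) := by rw [hzdef]; simp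
    have := hc.tendsto 0
    rw [h0] at this
    exact this.mono_left nhdsWithin_le_nhds
  have hmem : Set.Ioo (0:ℝ) Real.pi ∈ nhdsWithin (0:ℝ) (Set.Ioi 0) :=
    Ioo_mem_nhdsGT_of_mem ⟨le_refl 0, Real.pi_pos⟩
  -- rewrite cauchyTransform
  have hF : ∀ δ : ℝ, cauchyTransform θ f ((t₀:ℂ) * Complex.exp (Complex.I*θ) *
      Complex.exp ((σ:ℂ) * (Complex.I * δ)))
      = (1/(4*Real.pi*Complex.I)) * ∫ t in Set.Ioi (0:ℝ), kerF f (z δ) t := by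
    intro δ
    unfold cauchyTransform kerF
    congr 1
    refine MeasureTheory.setIntegral_congr_fun measurableSet_Ioi fun t _ => ?_
    have he : Complex.exp (Complex.I * θ) ≠ 0 := Complex.exp_ne_zero _
    rw [show (t:ℂ) * Complex.exp (Complex.I*θ) + (t₀:ℂ) * Complex.exp (Complex.I*θ) *
        Complex.exp ((σ:ℂ) * (Complex.I*δ)) = Complex.exp (Complex.I*θ) * ((t:ℂ) + z δ) by
        rw [hzdef]; ring,
      show (t:ℂ) * Complex.exp (Complex.I*θ) - (t₀:ℂ) * Complex.exp (Complex.I*θ) *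
        Complex.exp ((σ:ℂ) * (Complex.I*δ)) = Complex.exp (Complex.I*θ) * ((t:ℂ) - z δ) by
        rw [hzdef]; ring,
      mul_div_mul_left _ _ he]
  -- A part
  have hA : Filter.Tendsto (fun δ : ℝ => ∫ t in Set.Ioi (0:ℝ), kerA f t₀ a b (z δ) t)
      (nhdsWithin 0 (Set.Ioi 0))
      (nhds (∫ t in Set.Ioi (0:ℝ), kerA f t₀ a b (t₀:ℂ) t)) := by
    set C₁ : ℝ := (K : ℝ) * (b + t₀) / a with hC₁
    set m : ℝ := min (t₀ - a) (b - t₀) with hmdef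
    have hm : 0 < m := lt_min (by linarith) (by linarith)
    set C₂ : ℝ := 1 + 2 * t₀ / m with hC₂
    have hC₂pos : 0 < C₂ := by
      rw [hC₂]
      have : 0 ≤ 2 * t₀ / m := div_nonneg (by linarith) hm.le
      linarith
    have hC₁nn : 0 ≤ C₁ := by
      rw [hC₁]
      exact div_nonneg (mul_nonneg K.2 (by linarith)) ha.le
    have hratio_le : ∀ (δ : ℝ) (t : ℝ), 0 < t → t ≠ t₀ →
        ‖((t:ℂ) + z δ) / ((t:ℂ) - z δ)‖ ≤ (t + t₀) / |t - t₀| := by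
      intro δ t ht hne
      have hd : 0 < |t - t₀| := abs_pos.2 (sub_ne_zero.2 hne)
      have h0 := abs_sub_lower1 (z δ) t ht.le
      rw [habs δ] at h0
      have h1 := norm_ratio_le (z δ) t (|t - t₀|) ht.le h0 hd
      rwa [habs δ] at h1
    apply MeasureTheory.tendsto_integral_filter_of_dominated_convergence
      (F := fun δ : ℝ => fun t : ℝ => kerA f t₀ a b (z δ) t)
      (f := fun t : ℝ => kerA f t₀ a b (t₀:ℂ) t)
      (bound := fun t : ℝ => Set.indicator (Set.Ioo a b) (fun _ => C₁) t +
        C₂ * ‖(t:ℂ)⁻¹ * f t‖)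
    · filter_upwards [hmem] with δ hδ
      exact (kerA_integrable f hcont hint t₀ a b ha ht₀ (z δ) (habs δ)
        (himne δ hδ)).aestronglyMeasurable
    · refine Filter.Eventually.of_forall fun δ => ?_
      rw [MeasureTheory.ae_restrict_iff' measurableSet_Ioi]
      refine Filter.Eventually.of_forall fun t ht => ?_
      have ht' : (0:ℝ) < t := ht
      by_cases htI : t ∈ Set.Ioo a b
      · rw [Set.indicator_of_mem htI]
        by_cases hteq : t = t₀
        · subst hteq
          have h0 : kerA f t a b (z δ) t = 0 := by
            unfold kerA
            rw [Set.indicator_of_mem htI]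
            simp
          rw [h0, norm_zero]
          exact add_nonneg hC₁nn (mul_nonneg hC₂pos.le (norm_nonneg _))
        · have hd : 0 < |t - t₀| := abs_pos.2 (sub_ne_zero.2 hteq)
          have hlip : ‖f t - f t₀‖ ≤ (K:ℝ) * |t - t₀| := by
            have h1 := hK.dist_le_mul t htI t₀ ⟨hat, htb⟩
            rwa [Complex.dist_eq, Real.dist_eq] at h1
          have hnorminv : ‖(t:ℂ)⁻¹‖ = 1 / t := by
            rw [norm_inv, Complex.norm_real, Real.norm_eq_abs,
              _root_.abs_of_pos ht', one_div]
          calc ‖kerA f t₀ a b (z δ) t‖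
              = ‖(t:ℂ)⁻¹‖ * ‖((t:ℂ) + z δ) / ((t:ℂ) - z δ)‖ * ‖f t - f t₀‖ := by
                unfold kerA
                rw [Set.indicator_of_mem htI, norm_mul, norm_mul]
            _ ≤ (1/t) * ((t + t₀) / |t - t₀|) * ((K:ℝ) * |t - t₀|) := by
                rw [hnorminv]
                gcongr
                exact hratio_le δ t ht' hteq
            _ = (K:ℝ) * (t + t₀) / t := by
                field_simp
            _ ≤ C₁ := by
                rw [hC₁]
                exact div_le_div₀ (mul_nonneg K.2 (by linarith))
                  (mul_le_mul_of_nonneg_left (by linarith [htI.2]) K.2) ha htI.1.le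
            _ ≤ C₁ + C₂ * ‖(t:ℂ)⁻¹ * f t‖ :=
                le_add_of_nonneg_right (mul_nonneg hC₂pos.le (norm_nonneg _))
      · rw [Set.indicator_of_notMem htI, zero_add]
        have htI' := htI
        rw [Set.mem_Ioo, not_and_or, not_lt, not_lt] at htI'
        have hdm : m ≤ |t - t₀| := by
          rcases htI' with h | h
          · calc m ≤ t₀ - a := min_le_left _ _
              _ ≤ t₀ - t := by linarith
              _ ≤ |t - t₀| := by rw [abs_sub_comm]; exact le_abs_self _
          · calc m ≤ b - t₀ := min_le_right _ _
              _ ≤ t - t₀ := by linarith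
              _ ≤ |t - t₀| := le_abs_self _
        have hd : 0 < |t - t₀| := lt_of_lt_of_le hm hdm
        have hne : t ≠ t₀ := by
          intro h
          rw [h, sub_self, abs_zero] at hd
          exact lt_irrefl _ hd
        have hnorm : ‖kerA f t₀ a b (z δ) t‖
            = ‖((t:ℂ) + z δ) / ((t:ℂ) - z δ)‖ * ‖(t:ℂ)⁻¹ * f t‖ := by
          unfold kerA
          rw [Set.indicator_of_notMem htI, sub_zero,
            show (t:ℂ)⁻¹ * (((t:ℂ) + z δ) / ((t:ℂ) - z δ)) * f t
              = (((t:ℂ) + z δ) / ((t:ℂ) - z δ)) * ((t:ℂ)⁻¹ * f t) by ring, norm_mul]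
        rw [hnorm]
        apply mul_le_mul_of_nonneg_right ?_ (norm_nonneg _)
        calc ‖((t:ℂ) + z δ) / ((t:ℂ) - z δ)‖ ≤ (t + t₀) / |t - t₀| :=
            hratio_le δ t ht' hne
          _ ≤ (|t - t₀| + 2 * t₀) / |t - t₀| :=
              (div_le_div_iff_of_pos_right hd).2 (by nlinarith [le_abs_self (t - t₀)])
          _ = 1 + 2 * t₀ / |t - t₀| := by field_simp
          _ ≤ C₂ := by
              rw [hC₂]
              exact add_le_add (le_refl 1) (div_le_div_of_nonneg_left (by linarith) hm hdm)
    · apply MeasureTheory.Integrable.add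
      · have hc : IntegrableOn (fun _ : ℝ => C₁) (Set.Ioo a b) volume :=
          MeasureTheory.integrableOn_const measure_Ioo_lt_top.ne
        exact (hc.integrable_indicator measurableSet_Ioo).integrableOn
      · exact hint.norm.const_mul C₂
    · have hane : ∀ᵐ t ∂(volume.restrict (Set.Ioi (0:ℝ))), t ≠ t₀ := by
        apply MeasureTheory.ae_restrict_of_ae
        rw [MeasureTheory.ae_iff]
        have h1 : {x : ℝ | ¬ x ≠ t₀} = {t₀} := by ext x; simp
        rw [h1]
        exact measure_singleton t₀
      filter_upwards [hane] with t htne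
      have hden : (t:ℂ) - (t₀:ℂ) ≠ 0 := sub_ne_zero.2 (by exact_mod_cast htne)
      have hco : ContinuousAt (fun w : ℂ => (t:ℂ)⁻¹ * (((t:ℂ) + w) / ((t:ℂ) - w)) *
          (f t - Set.indicator (Set.Ioo a b) (fun _ => f t₀) t)) (t₀:ℂ) := by
        apply ContinuousAt.mul (ContinuousAt.mul continuousAt_const ?_) continuousAt_const
        exact ContinuousAt.div (continuousAt_const.add continuousAt_id)
          (continuousAt_const.sub continuousAt_id) hden
      exact hco.tendsto.comp hzlim
  -- B parts
  have hBb : Filter.Tendsto (fun δ : ℝ => Complex.log ((b:ℂ) - z δ))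
      (nhdsWithin 0 (Set.Ioi 0)) (nhds (Complex.log ((b:ℂ) - (t₀:ℂ)))) := by
    apply Filter.Tendsto.clog (tendsto_const_nhds.sub hzlim)
    apply Complex.mem_slitPlane_iff.2 (Or.inl ?_)
    simp only [Complex.sub_re, Complex.ofReal_re]
    linarith
  have hBa : Filter.Tendsto (fun δ : ℝ => Complex.log ((a:ℂ) - z δ))
      (nhdsWithin 0 (Set.Ioi 0))
      (nhds ((Real.log (t₀ - a) : ℂ) - (σ:ℂ) * Real.pi * Complex.I)) := by
    have hw₀re : ((a:ℂ) - (t₀:ℂ)).re < 0 := by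
      simp only [Complex.sub_re, Complex.ofReal_re]; linarith
    have hw₀im : ((a:ℂ) - (t₀:ℂ)).im = 0 := by simp
    have hw₀abs : Real.log ‖(a:ℂ) - (t₀:ℂ)‖ = Real.log (t₀ - a) := by
      rw [show (a:ℂ) - (t₀:ℂ) = ((a - t₀ : ℝ):ℂ) by push_cast; ring, Complex.norm_real, Real.norm_eq_abs,
        _root_.abs_of_neg (by linarith)]
      ring_nf
    have htnd : Filter.Tendsto (fun δ : ℝ => (a:ℂ) - z δ) (nhdsWithin 0 (Set.Ioi 0))
        (nhds ((a:ℂ) - (t₀:ℂ))) := tendsto_const_nhds.sub hzlim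
    rcases hσ with h | h <;> subst h
    · have hmain := Complex.tendsto_log_nhdsWithin_im_neg_of_re_neg_of_im_zero hw₀re hw₀im
      have hcomp : Filter.Tendsto (fun δ : ℝ => (a:ℂ) - z δ) (nhdsWithin 0 (Set.Ioi 0))
          (nhdsWithin ((a:ℂ) - (t₀:ℂ)) { w : ℂ | w.im < 0 }) := by
        rw [tendsto_nhdsWithin_iff]
        refine ⟨htnd, ?_⟩
        filter_upwards [hmem] with δ hδ
        have h1 := himpos δ hδ
        simp only [Set.mem_setOf_eq, Complex.sub_im, Complex.ofReal_im, zero_sub, neg_neg]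
        nlinarith
      have := hmain.comp hcomp
      rw [hw₀abs] at this
      convert this using 2
      · rfl
      push_cast
      ring
    · have hmain := Complex.tendsto_log_nhdsWithin_im_nonneg_of_re_neg_of_im_zero hw₀re hw₀im
      have hcomp : Filter.Tendsto (fun δ : ℝ => (a:ℂ) - z δ) (nhdsWithin 0 (Set.Ioi 0))
          (nhdsWithin ((a:ℂ) - (t₀:ℂ)) { w : ℂ | 0 ≤ w.im }) := by
        rw [tendsto_nhdsWithin_iff]
        refine ⟨htnd, ?_⟩
        filter_upwards [hmem] with δ hδ
        have h1 := himpos δ hδ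
        simp only [Set.mem_setOf_eq, Complex.sub_im, Complex.ofReal_im, zero_sub]
        nlinarith
      have := hmain.comp hcomp
      rw [hw₀abs] at this
      convert this using 2
      · rfl
      push_cast
      ring
  -- assemble
  have hfull : Filter.Tendsto (fun δ : ℝ => (1/(4*Real.pi*Complex.I)) *
      ((∫ t in Set.Ioi (0:ℝ), kerA f t₀ a b (z δ) t) +
        ((-Complex.log b + 2 * Complex.log ((b:ℂ) - z δ)) -
          (-Complex.log a + 2 * Complex.log ((a:ℂ) - z δ))) * f t₀))
      (nhdsWithin 0 (Set.Ioi 0)) (nhds (plemeljLimit f t₀ a b σ)) := by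
    unfold plemeljLimit
    apply Filter.Tendsto.const_mul
    apply hA.add
    apply Filter.Tendsto.mul_const
    exact (tendsto_const_nhds.add (hBb.const_mul (2:ℂ))).sub
      (tendsto_const_nhds.add (hBa.const_mul (2:ℂ)))
  apply hfull.congr'
  filter_upwards [hmem] with δ hδ
  rw [hF δ, kerF_integral_split f hcont hint t₀ a b ha (hat.trans htb) ht₀ (z δ)
    (habs δ) (himne δ hδ)]


end PlemeljAux

theorem plemelj_jump
    (θ : ℝ) (f : ℝ → ℂ)
    (hcont : ContinuousOn f (Set.Ioi 0))
    (hint : IntegrableOn (fun t : ℝ => (t : ℂ)⁻¹ * f t) (Set.Ioi 0))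
    (t₀ : ℝ) (ht₀ : 0 < t₀)
    (hLip : ∃ ε > 0, ∃ K : NNReal, LipschitzOnWith K f (Set.Ioo (t₀ - ε) (t₀ + ε))) :
    ∃ Lp Lm : ℂ,
      Tendsto (fun δ : ℝ =>
          cauchyTransform θ f ((t₀ : ℂ) * Complex.exp (Complex.I * θ) *
            Complex.exp (Complex.I * δ)))
        (nhdsWithin 0 (Set.Ioi 0)) (nhds Lp) ∧
      Tendsto (fun δ : ℝ =>
          cauchyTransform θ f ((t₀ : ℂ) * Complex.exp (Complex.I * θ) *
            Complex.exp (-(Complex.I * δ))))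
        (nhdsWithin 0 (Set.Ioi 0)) (nhds Lm) ∧
      Lp - Lm = f t₀ := by
  obtain ⟨ε, hε, K, hK⟩ := hLip
  set m : ℝ := min (ε/2) (t₀/2) with hmdef
  have hm : 0 < m := lt_min (by linarith) (by linarith)
  have hm2 : m ≤ ε/2 := min_le_left _ _
  have hm3 : m ≤ t₀/2 := min_le_right _ _
  set a : ℝ := t₀ - m with hadef
  set b : ℝ := t₀ + m with hbdef
  have ha : 0 < a := by rw [hadef]; linarith
  have hat : a < t₀ := by rw [hadef]; linarith
  have htb : t₀ < b := by rw [hbdef]; linarith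
  have hsub : Set.Ioo a b ⊆ Set.Ioo (t₀ - ε) (t₀ + ε) :=
    Set.Ioo_subset_Ioo (by rw [hadef]; linarith) (by rw [hbdef]; linarith)
  have hK' := hK.mono hsub
  refine ⟨PlemeljAux.plemeljLimit f t₀ a b 1, PlemeljAux.plemeljLimit f t₀ a b (-1), ?_, ?_, ?_⟩
  · have h := PlemeljAux.onesided θ f hcont hint t₀ a b ha hat htb K hK' 1 (Or.inl rfl)
    apply h.congr
    intro δ
    simp only [Complex.ofReal_one, one_mul]
  · have h := PlemeljAux.onesided θ f hcont hint t₀ a b ha hat htb K hK' (-1) (Or.inr rfl)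
    apply h.congr
    intro δ
    simp only [Complex.ofReal_neg, Complex.ofReal_one, neg_one_mul, neg_mul, one_mul]
  · unfold PlemeljAux.plemeljLimit
    have hI : Complex.I ≠ 0 := Complex.I_ne_zero
    have hπ : (Real.pi : ℂ) ≠ 0 := Complex.ofReal_ne_zero.2 Real.pi_ne_zero
    push_cast
    field_simp
    ring
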